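/- Let f be differentiable on an open interval containing [a,b] with a < b, f' ∈ L[a,b], q ≥ 1, |f'|^q convex on [a,b], and g : [a,b] → ℝ continuous. Then for all x ∈ [a,b]: |f(x)∫_a^b g − ∫_a^b fg| ≤ ‖g‖_∞ · [((x−a)² + (b−x)²)/2]^{(q−1)/q} · { [((x−a)²(3b−a−2x) + 2(b−x)³)/(6(b−a))]·|f'(a)|^q + [(2(x−a)³ + (b−x)²(b+2x−3a))/(6(b−a))]·|f'(b)|^q }^{1/q}. -/

import Mathlib

/-!
Write `f x * ∫ g - ∫ f g = ∫ (f x - f s) g s ds`. By convexity `|f'|^q` lies below the chord `ℓ`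
through `(a, |f' a|^q)` and `(b, |f' b|^q)`; if `Φ` is a primitive of `ℓ`, Hölder's inequality on
the segment between `s` and `x` gives `|f x - f s| ≤ |x - s|^(1 - 1/q) |Φ x - Φ s|^(1/q)`.
Integrating against `|g| ≤ ‖g‖∞` and applying Hölder once more leaves the elementary integrals
`∫ |x - s| ds` and `∫ |Φ x - Φ s| ds`, which are the two brackets of the bound.
-/

open MeasureTheory Set

theorem MeasureTheory.integral_rpow_mul_rpow_le {α : Type*} [MeasurableSpace α] {μ : Measure α}
    {u v : α → ℝ} (hu : Integrable u μ) (hv : Integrable v μ)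
    (hu0 : 0 ≤ᵐ[μ] u) (hv0 : 0 ≤ᵐ[μ] v) {p r : ℝ} (hp : 0 ≤ p) (hr : 0 ≤ r) (hpr : p + r = 1) :
    ∫ a, u a ^ p * v a ^ r ∂μ ≤ (∫ a, u a ∂μ) ^ p * (∫ a, v a ∂μ) ^ r := by
  have hmeas : AEStronglyMeasurable (fun a => u a ^ p * v a ^ r) μ :=
    (hu.1.aemeasurable.pow_const p).aestronglyMeasurable.mul
      (hv.1.aemeasurable.pow_const r).aestronglyMeasurable
  have hprod0 : 0 ≤ᵐ[μ] fun a => u a ^ p * v a ^ r := by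
    filter_upwards [hu0, hv0] with a ha hb
    exact mul_nonneg (Real.rpow_nonneg ha p) (Real.rpow_nonneg hb r)
  have hofReal : ∀ᵐ a ∂μ, ENNReal.ofReal (u a ^ p * v a ^ r)
      = ENNReal.ofReal (u a) ^ p * ENNReal.ofReal (v a) ^ r := by
    filter_upwards [hu0, hv0] with a ha hb
    rw [ENNReal.ofReal_mul (Real.rpow_nonneg ha p), ENNReal.ofReal_rpow_of_nonneg ha hp,
      ENNReal.ofReal_rpow_of_nonneg hb hr]
  have hholder := ENNReal.lintegral_mul_norm_pow_le hu.1.aemeasurable.ennreal_ofReal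
    hv.1.aemeasurable.ennreal_ofReal hp hr hpr
  rw [integral_eq_lintegral_of_nonneg_ae hprod0 hmeas, integral_eq_lintegral_of_nonneg_ae hu0 hu.1,
    integral_eq_lintegral_of_nonneg_ae hv0 hv.1, ENNReal.toReal_rpow, ENNReal.toReal_rpow,
    ← ENNReal.toReal_mul, lintegral_congr_ae hofReal]
  refine ENNReal.toReal_mono ?_ hholder
  exact ENNReal.mul_ne_top (ENNReal.rpow_ne_top_of_nonneg hp hu.lintegral_lt_top.ne)
    (ENNReal.rpow_ne_top_of_nonneg hr hv.lintegral_lt_top.ne)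

theorem intervalIntegral.integral_rpow_mul_rpow_le {u v : ℝ → ℝ} {c d : ℝ} (hcd : c ≤ d)
    (hu : IntervalIntegrable u volume c d) (hv : IntervalIntegrable v volume c d)
    (hu0 : ∀ t ∈ Ioc c d, 0 ≤ u t) (hv0 : ∀ t ∈ Ioc c d, 0 ≤ v t)
    {p r : ℝ} (hp : 0 ≤ p) (hr : 0 ≤ r) (hpr : p + r = 1) :
    ∫ t in c..d, u t ^ p * v t ^ r ≤ (∫ t in c..d, u t) ^ p * (∫ t in c..d, v t) ^ r := by
  simp only [intervalIntegral.integral_of_le hcd]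
  exact MeasureTheory.integral_rpow_mul_rpow_le hu.1 hv.1
    (ae_restrict_of_forall_mem measurableSet_Ioc hu0)
    (ae_restrict_of_forall_mem measurableSet_Ioc hv0) hp hr hpr

theorem intervalIntegral.integral_abs_le_of_abs_rpow_le {w ℓ : ℝ → ℝ} {c d q : ℝ} (hcd : c ≤ d)
    (hq : 1 ≤ q) (hw : IntervalIntegrable w volume c d) (hℓ : IntervalIntegrable ℓ volume c d)
    (hwℓ : ∀ t ∈ Icc c d, |w t| ^ q ≤ ℓ t) :
    ∫ t in c..d, |w t| ≤ (d - c) ^ ((q - 1) / q) * (∫ t in c..d, ℓ t) ^ (1 / q) := by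
  have hq0 : 0 < q := zero_lt_one.trans_le hq
  have hwq : IntervalIntegrable (fun t => |w t| ^ q) volume c d := by
    refine hℓ.mono_fun' ?_ ?_ <;> rw [uIoc_of_le hcd]
    · exact (hw.1.aemeasurable.abs.pow_const q).aestronglyMeasurable
    filter_upwards [ae_restrict_mem measurableSet_Ioc] with t ht
    rw [Real.norm_of_nonneg (by positivity)]
    exact hwℓ t (Ioc_subset_Icc_self ht)
  calc ∫ t in c..d, |w t|
      = ∫ t in c..d, (1 : ℝ) ^ ((q - 1) / q) * (|w t| ^ q) ^ (1 / q) := by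
        refine intervalIntegral.integral_congr fun t _ => ?_
        rw [Real.one_rpow, one_mul, ← Real.rpow_mul (abs_nonneg _), mul_one_div_cancel hq0.ne',
          Real.rpow_one]
    _ ≤ (∫ _ in c..d, (1 : ℝ)) ^ ((q - 1) / q) * (∫ t in c..d, |w t| ^ q) ^ (1 / q) :=
        intervalIntegral.integral_rpow_mul_rpow_le hcd intervalIntegrable_const hwq
          (fun _ _ => zero_le_one) (fun _ _ => by positivity)
          (div_nonneg (by linarith) hq0.le) (by positivity) (by field_simp; ring)
    _ ≤ (d - c) ^ ((q - 1) / q) * (∫ t in c..d, ℓ t) ^ (1 / q) := by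
        rw [intervalIntegral.integral_const, smul_eq_mul, mul_one]
        gcongr
        · exact intervalIntegral.integral_nonneg hcd fun _ _ => by positivity
        · exact intervalIntegral.integral_mono_on hcd hwq hℓ hwℓ

theorem abs_sub_le_of_abs_deriv_rpow_le {f f' L ℓ : ℝ → ℝ} {s x q : ℝ} (hq : 1 ≤ q)
    (hf : ∀ t ∈ uIcc s x, HasDerivAt f (f' t) t) (hf' : IntervalIntegrable f' volume s x)
    (hL : ∀ t ∈ uIcc s x, HasDerivAt L (ℓ t) t) (hℓ : IntervalIntegrable ℓ volume s x)
    (hf'ℓ : ∀ t ∈ uIcc s x, |f' t| ^ q ≤ ℓ t) :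
    |f x - f s| ≤ |x - s| ^ ((q - 1) / q) * |L x - L s| ^ (1 / q) := by
  wlog hsx : s ≤ x generalizing s x
  · have h := this (uIcc_comm s x ▸ hf) hf'.symm (uIcc_comm s x ▸ hL) hℓ.symm
      (uIcc_comm s x ▸ hf'ℓ) (le_of_not_ge hsx)
    rwa [abs_sub_comm (f s), abs_sub_comm s, abs_sub_comm (L s)] at h
  rw [uIcc_of_le hsx] at hf hL hf'ℓ
  have hℓ0 : 0 ≤ ∫ t in s..x, ℓ t :=
    intervalIntegral.integral_nonneg hsx fun t ht =>
      (by positivity : 0 ≤ |f' t| ^ q).trans (hf'ℓ t ht)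
  rw [← intervalIntegral.integral_eq_sub_of_hasDerivAt (uIcc_of_le hsx ▸ hf) hf',
    ← intervalIntegral.integral_eq_sub_of_hasDerivAt (uIcc_of_le hsx ▸ hL) hℓ,
    abs_of_nonneg (sub_nonneg.2 hsx), abs_of_nonneg hℓ0]
  exact (intervalIntegral.abs_integral_le_integral_abs hsx).trans
    (intervalIntegral.integral_abs_le_of_abs_rpow_le hsx hq hf' hℓ hf'ℓ)

theorem integral_abs_sub_of_monotoneOn {L Λ : ℝ → ℝ} {a b x : ℝ} (hL : MonotoneOn L (Icc a b))
    (hΛ : ∀ t ∈ Icc a b, HasDerivAt Λ (L t) t) (hx : x ∈ Icc a b) :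
    ∫ s in a..b, |L x - L s| = (2 * x - a - b) * L x + Λ a + Λ b - 2 * Λ x := by
  have ha : a ∈ Icc a b := left_mem_Icc.2 (hx.1.trans hx.2)
  have hb : b ∈ Icc a b := right_mem_Icc.2 (hx.1.trans hx.2)
  have hLint : ∀ c ∈ Icc a b, ∀ d ∈ Icc a b, IntervalIntegrable L volume c d :=
    fun c hc d hd => (hL.mono (uIcc_subset_Icc hc hd)).intervalIntegrable
  have hint : ∀ c ∈ Icc a b, ∀ d ∈ Icc a b, ∫ s in c..d, L s = Λ d - Λ c :=
    fun c hc d hd => intervalIntegral.integral_eq_sub_of_hasDerivAt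
      (fun t ht => hΛ t (uIcc_subset_Icc hc hd ht)) (hLint c hc d hd)
  have hleft : ∫ s in a..x, |L x - L s| = ∫ s in a..x, (L x - L s) :=
    intervalIntegral.integral_congr fun s hs => by
      rw [uIcc_of_le hx.1] at hs
      exact abs_of_nonneg (sub_nonneg.2 (hL ⟨hs.1, hs.2.trans hx.2⟩ hx hs.2))
  have hright : ∫ s in x..b, |L x - L s| = ∫ s in x..b, (L s - L x) :=
    intervalIntegral.integral_congr fun s hs => by
      rw [uIcc_of_le hx.2] at hs
      rw [abs_sub_comm]
      exact abs_of_nonneg (sub_nonneg.2 (hL hx ⟨hx.1.trans hs.1, hs.2⟩ hs.1))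
  have habs : ∀ c ∈ Icc a b, ∀ d ∈ Icc a b, IntervalIntegrable (fun s => |L x - L s|) volume c d :=
    fun c hc d hd => (intervalIntegrable_const.sub (hLint c hc d hd)).abs
  rw [← intervalIntegral.integral_add_adjacent_intervals (habs a ha x hx) (habs x hx b hb), hleft,
    hright, intervalIntegral.integral_sub intervalIntegrable_const (hLint a ha x hx),
    intervalIntegral.integral_sub (hLint x hx b hb) intervalIntegrable_const,
    hint a ha x hx, hint x hx b hb]
  simp only [intervalIntegral.integral_const, smul_eq_mul]
  ring

theorem integral_abs_sub_of_mem_Icc {a b x : ℝ} (hx : x ∈ Icc a b) :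
    ∫ s in a..b, |x - s| = ((x - a) ^ 2 + (b - x) ^ 2) / 2 := by
  have hΛ (t : ℝ) : HasDerivAt (fun t : ℝ => t ^ 2 / 2) t t := by
    simpa using (hasDerivAt_pow 2 t).div_const 2
  have h := integral_abs_sub_of_monotoneOn monotoneOn_id (fun t _ => hΛ t) hx
  simp only [id] at h
  rw [h]
  ring

noncomputable def chord (a b A B t : ℝ) : ℝ := ((b - t) * A + (t - a) * B) / (b - a)

noncomputable def chordPrimitive (a b A B t : ℝ) : ℝ :=
  ((t - a) ^ 2 * B - (b - t) ^ 2 * A) / (2 * (b - a))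

theorem ConvexOn.le_chord {φ : ℝ → ℝ} {a b t : ℝ} (hφ : ConvexOn ℝ (Icc a b) φ) (hab : a < b)
    (ht : t ∈ Icc a b) : φ t ≤ chord a b (φ a) (φ b) t := by
  have hba : 0 < b - a := sub_pos.2 hab
  have h := hφ.2 (left_mem_Icc.2 hab.le) (right_mem_Icc.2 hab.le)
    (div_nonneg (sub_nonneg.2 ht.2) hba.le) (div_nonneg (sub_nonneg.2 ht.1) hba.le)
    (by rw [← add_div, div_eq_one_iff_eq hba.ne']; ring)
  have hcomb : ((b - t) / (b - a)) • a + ((t - a) / (b - a)) • b = t := by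
    simp only [smul_eq_mul]; field_simp; ring
  rw [hcomb] at h
  calc φ t ≤ (b - t) / (b - a) * φ a + (t - a) / (b - a) * φ b := h
    _ = chord a b (φ a) (φ b) t := by unfold chord; ring

theorem chord_nonneg {a b A B t : ℝ} (hA : 0 ≤ A) (hB : 0 ≤ B) (ht : t ∈ Icc a b) :
    0 ≤ chord a b A B t :=
  div_nonneg (add_nonneg (mul_nonneg (sub_nonneg.2 ht.2) hA) (mul_nonneg (sub_nonneg.2 ht.1) hB))
    (sub_nonneg.2 (ht.1.trans ht.2))

theorem continuous_chord (a b A B : ℝ) : Continuous (chord a b A B) := by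
  unfold chord; fun_prop

theorem continuous_chordPrimitive (a b A B : ℝ) : Continuous (chordPrimitive a b A B) := by
  unfold chordPrimitive; fun_prop

theorem hasDerivAt_chordPrimitive (a b A B t : ℝ) :
    HasDerivAt (chordPrimitive a b A B) (chord a b A B t) t := by
  have h := ((((hasDerivAt_id t).sub_const a).pow 2).mul_const B).sub
    ((((hasDerivAt_id t).const_sub b).pow 2).mul_const A) |>.div_const (2 * (b - a))
  refine h.congr_deriv ?_
  simp only [chord, id, ← div_div]
  push_cast
  ring

theorem monotoneOn_chordPrimitive {a b A B : ℝ} (hA : 0 ≤ A) (hB : 0 ≤ B) :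
    MonotoneOn (chordPrimitive a b A B) (Icc a b) :=
  monotoneOn_of_hasDerivWithinAt_nonneg (convex_Icc a b)
    (continuous_chordPrimitive a b A B).continuousOn
    (fun t _ => (hasDerivAt_chordPrimitive a b A B t).hasDerivWithinAt)
    (fun _ ht => chord_nonneg hA hB (interior_subset ht))

theorem integral_abs_chordPrimitive_sub {a b A B x : ℝ} (hA : 0 ≤ A) (hB : 0 ≤ B)
    (hx : x ∈ Icc a b) :
    ∫ s in a..b, |chordPrimitive a b A B x - chordPrimitive a b A B s|
      = ((x - a) ^ 2 * (3 * b - a - 2 * x) + 2 * (b - x) ^ 3) / (6 * (b - a)) * A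
        + (2 * (x - a) ^ 3 + (b - x) ^ 2 * (b + 2 * x - 3 * a)) / (6 * (b - a)) * B := by
  have hΛ (t : ℝ) : HasDerivAt (fun t => ((t - a) ^ 3 * B + (b - t) ^ 3 * A) / (6 * (b - a)))
      (chordPrimitive a b A B t) t := by
    have h := ((((hasDerivAt_id t).sub_const a).pow 3).mul_const B).add
      ((((hasDerivAt_id t).const_sub b).pow 3).mul_const A) |>.div_const (6 * (b - a))
    refine h.congr_deriv ?_
    simp only [chordPrimitive, id, ← div_div]
    push_cast
    ring
  rw [integral_abs_sub_of_monotoneOn (monotoneOn_chordPrimitive hA hB) (fun t _ => hΛ t) hx]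
  simp only [chordPrimitive, ← div_div]
  ring

theorem abs_integral_mul_le_sSup_mul {F ψ g : ℝ → ℝ} {a b : ℝ} (hab : a ≤ b)
    (hF : IntervalIntegrable F volume a b) (hψ : IntervalIntegrable ψ volume a b)
    (hg : ContinuousOn g (Icc a b)) (hFψ : ∀ s ∈ Icc a b, |F s| ≤ ψ s) :
    |∫ s in a..b, F s * g s| ≤ sSup ((fun t => |g t|) '' Icc a b) * ∫ s in a..b, ψ s := by
  set M := sSup ((fun t => |g t|) '' Icc a b)
  have hM (s : ℝ) (hs : s ∈ Icc a b) : |g s| ≤ M :=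
    le_csSup (isCompact_Icc.image_of_continuousOn hg.abs).bddAbove (mem_image_of_mem _ hs)
  have hFg : IntervalIntegrable (fun s => F s * g s) volume a b :=
    hF.mul_continuousOn (uIcc_of_le hab ▸ hg)
  calc |∫ s in a..b, F s * g s| ≤ ∫ s in a..b, |F s * g s| :=
        intervalIntegral.abs_integral_le_integral_abs hab
    _ ≤ ∫ s in a..b, M * ψ s := by
        refine intervalIntegral.integral_mono_on hab hFg.abs (hψ.const_mul M) fun s hs => ?_
        rw [abs_mul, mul_comm M]
        exact mul_le_mul (hFψ s hs) (hM s hs) (abs_nonneg _) ((abs_nonneg _).trans (hFψ s hs))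
    _ = M * ∫ s in a..b, ψ s := intervalIntegral.integral_const_mul M ψ

theorem stmt_5_general (f f' g : ℝ → ℝ) (a b q : ℝ) (hab : a < b) (hq : 1 ≤ q)
    (I : Set ℝ) (hIab : Icc a b ⊆ I)
    (hf : ∀ t ∈ I, HasDerivAt f (f' t) t)
    (hf' : IntervalIntegrable f' volume a b)
    (hconv : ConvexOn ℝ (Icc a b) (fun t => |f' t| ^ q))
    (hg : ContinuousOn g (Icc a b))
    (x : ℝ) (hx : x ∈ Icc a b) :
    |f x * (∫ s in a..b, g s) - ∫ s in a..b, f s * g s|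
      ≤ sSup ((fun t => |g t|) '' Icc a b) *
        (((x - a) ^ 2 + (b - x) ^ 2) / 2) ^ ((q - 1) / q) *
        (((x - a) ^ 2 * (3 * b - a - 2 * x) + 2 * (b - x) ^ 3) / (6 * (b - a)) * |f' a| ^ q
          + (2 * (x - a) ^ 3 + (b - x) ^ 2 * (b + 2 * x - 3 * a)) / (6 * (b - a)) * |f' b| ^ q)
          ^ (1 / q) := by
  set Φ := chordPrimitive a b (|f' a| ^ q) (|f' b| ^ q)
  have hA : 0 ≤ |f' a| ^ q := by positivity
  have hB : 0 ≤ |f' b| ^ q := by positivity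
  have hq0 : 0 < q := zero_lt_one.trans_le hq
  have hpoint (s : ℝ) (hs : s ∈ Icc a b) :
      |f x - f s| ≤ |x - s| ^ ((q - 1) / q) * |Φ x - Φ s| ^ (1 / q) := by
    have hsub : uIcc s x ⊆ Icc a b := uIcc_subset_Icc hs hx
    exact abs_sub_le_of_abs_deriv_rpow_le hq (fun t ht => hf t (hIab (hsub ht)))
      (hf'.mono_set (uIcc_of_le hab.le ▸ hsub)) (fun t _ => hasDerivAt_chordPrimitive _ _ _ _ t)
      ((continuous_chord _ _ _ _).intervalIntegrable _ _) (fun t ht => hconv.le_chord hab (hsub ht))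
  have hfc : ContinuousOn f (uIcc a b) := fun t ht =>
    (hf t (hIab (uIcc_of_le hab.le ▸ ht))).continuousAt.continuousWithinAt
  have hgi : IntervalIntegrable g volume a b := (uIcc_of_le hab.le ▸ hg).intervalIntegrable
  have hsplit : f x * (∫ s in a..b, g s) - ∫ s in a..b, f s * g s
      = ∫ s in a..b, (f x - f s) * g s := by
    simp only [sub_mul]
    rw [intervalIntegral.integral_sub (hgi.const_mul _) (hfc.intervalIntegrable.mul_continuousOn
      (uIcc_of_le hab.le ▸ hg)), intervalIntegral.integral_const_mul]
  have hu : Continuous fun s => |x - s| := by fun_prop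
  have hv : Continuous fun s => |Φ x - Φ s| :=
    (continuous_const.sub (continuous_chordPrimitive _ _ _ _)).abs
  rw [hsplit, mul_assoc]
  calc |∫ s in a..b, (f x - f s) * g s|
      ≤ sSup ((fun t => |g t|) '' Icc a b) *
          ∫ s in a..b, |x - s| ^ ((q - 1) / q) * |Φ x - Φ s| ^ (1 / q) :=
        abs_integral_mul_le_sSup_mul hab.le (intervalIntegrable_const.sub hfc.intervalIntegrable)
          ((hu.rpow_const fun _ => Or.inr (div_nonneg (by linarith) hq0.le)).mul
            (hv.rpow_const fun _ => Or.inr (by positivity)) |>.intervalIntegrable _ _) hg hpoint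
    _ ≤ _ := by
        gcongr
        · exact Real.sSup_nonneg fun _ ⟨t, _, ht⟩ => ht ▸ abs_nonneg (g t)
        · rw [← integral_abs_sub_of_mem_Icc hx, ← integral_abs_chordPrimitive_sub hA hB hx]
          exact intervalIntegral.integral_rpow_mul_rpow_le hab.le (hu.intervalIntegrable _ _)
            (hv.intervalIntegrable _ _) (fun _ _ => abs_nonneg _) (fun _ _ => abs_nonneg _)
            (div_nonneg (by linarith) hq0.le) (by positivity) (by field_simp; ring)

theorem stmt_5 (f f' g : ℝ → ℝ) (a b q : ℝ) (hab : a < b) (hq : 1 ≤ q)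
    (I : Set ℝ) (hI : IsOpen I) (hIab : Icc a b ⊆ I)
    (hf : ∀ t ∈ I, HasDerivAt f (f' t) t)
    (hf' : IntervalIntegrable f' volume a b)
    (hconv : ConvexOn ℝ (Icc a b) (fun t => |f' t| ^ q))
    (hg : ContinuousOn g (Icc a b))
    (x : ℝ) (hx : x ∈ Icc a b) :
    |f x * (∫ s in a..b, g s) - ∫ s in a..b, f s * g s|
      ≤ sSup ((fun t => |g t|) '' Icc a b) *
        (((x - a) ^ 2 + (b - x) ^ 2) / 2) ^ ((q - 1) / q) *
        (((x - a) ^ 2 * (3 * b - a - 2 * x) + 2 * (b - x) ^ 3) / (6 * (b - a)) * |f' a| ^ q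
          + (2 * (x - a) ^ 3 + (b - x) ^ 2 * (b + 2 * x - 3 * a)) / (6 * (b - a)) * |f' b| ^ q)
          ^ (1 / q) :=
  stmt_5_general f f' g a b q hab hq I hIab hf hf' hconv hg x hx
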